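/- For j = 1,…,m let M_j ⊆ ℝ^{n_j} be given by a C^p patch (V_j, φ_j) through x̄_j, and let A_j : ℝ^{n_j} → Set ℝ^{n_j} be partly smooth at x̄_j relative to M_j. Then the product operator A(x₁,…,x_m) = A₁(x₁) × ⋯ × A_m(x_m) on ℝ^{n₁} × ⋯ × ℝ^{n_m} is partly smooth at (x̄₁,…,x̄_m) relative to M₁ × ⋯ × M_m, the latter given by the product patch (V₁ × ⋯ × V_m, (t₁,…,t_m) ↦ (φ₁(t₁),…,φ_m(t_m))). -/

import Mathlib

open Filter Topology Set RealInnerProductSpace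

noncomputable section

/-- A set-valued operator `A` is upper semicontinuous: whenever `x k → x₀`,
`u k ∈ A (x k)` for all `k`, and `u k → u₀`, then `u₀ ∈ A x₀`. -/
def UpperSC {E : Type*} [NormedAddCommGroup E] [InnerProductSpace ℝ E]
    (A : E → Set E) : Prop :=
  ∀ (x u : ℕ → E) (x₀ u₀ : E),
    Tendsto x atTop (𝓝 x₀) → (∀ k, u k ∈ A (x k)) → Tendsto u atTop (𝓝 u₀) →
      u₀ ∈ A x₀

/-- `A` is lower semicontinuous along `S` at `x₀ ∈ S`. -/
def LowerSCAlongAt {E : Type*} [NormedAddCommGroup E] [InnerProductSpace ℝ E]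
    (A : E → Set E) (S : Set E) (x₀ : E) : Prop :=
  ∀ u₀ ∈ A x₀, ∀ x : ℕ → E, (∀ k, x k ∈ S) → Tendsto x atTop (𝓝 x₀) →
    ∃ u : ℕ → E, (∀ k, u k ∈ A (x k)) ∧ Tendsto u atTop (𝓝 u₀)

/-- `A` is continuous along `S` near `xbar`: lower semicontinuous along `S` at every
point of `S` in some neighborhood of `xbar`. -/
def ContinuousAlongNear {E : Type*} [NormedAddCommGroup E] [InnerProductSpace ℝ E]
    (A : E → Set E) (S : Set E) (xbar : E) : Prop :=
  ∃ W ∈ 𝓝 xbar, ∀ x ∈ S ∩ W, LowerSCAlongAt A S x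

/-- A `C^p` patch (local parametrization) of a manifold `M ⊆ E` through `xbar`,
with parameter domain `F` (playing the role of `ℝ^d`). -/
structure CpPatch (p : ℕ∞) (F : Type*) [NormedAddCommGroup F] [InnerProductSpace ℝ F]
    {E : Type*} [NormedAddCommGroup E] [InnerProductSpace ℝ E]
    (M : Set E) (xbar : E) where
  V : Set F
  toFun : F → E
  isOpen_V : IsOpen V
  zero_mem : (0 : F) ∈ V
  contDiffOn : ContDiffOn ℝ p toFun V
  injOn : Set.InjOn toFun V
  fderiv_injective : ∀ t ∈ V, Function.Injective (fderiv ℝ toFun t)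
  map_zero : toFun 0 = xbar
  image_eq : M = toFun '' V

namespace CpPatch

variable {p : ℕ∞} {F : Type*} [NormedAddCommGroup F] [InnerProductSpace ℝ F]
  {E : Type*} [NormedAddCommGroup E] [InnerProductSpace ℝ E] {M : Set E} {xbar : E}

/-- The tangent space `T_M(x) = range (Dφ(t))` where `x = φ(t)`, `t ∈ V`. -/
def tangent (P : CpPatch p F M xbar) (x : E) : Submodule ℝ E :=
  haveI : Nonempty F := ⟨0⟩
  LinearMap.range ((fderiv ℝ P.toFun (Function.invFunOn P.toFun P.V x) : F →L[ℝ] E) : F →ₗ[ℝ] E)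

/-- The normal space `N_M(x) = (T_M(x))ᗮ`. -/
def normal (P : CpPatch p F M xbar) (x : E) : Submodule ℝ E :=
  (P.tangent x)ᗮ

end CpPatch

/-- `Lin S`: the direction of the affine span of `S`. -/
def Lin {E : Type*} [NormedAddCommGroup E] [InnerProductSpace ℝ E] (S : Set E) :
    Submodule ℝ E :=
  (affineSpan ℝ S).direction

/-- `A` is partly smooth at `xbar` relative to `M` (given by the `C^p` patch `P`). -/
def PartlySmoothAt {p : ℕ∞} {F : Type*} [NormedAddCommGroup F] [InnerProductSpace ℝ F]
    {E : Type*} [NormedAddCommGroup E] [InnerProductSpace ℝ E] [FiniteDimensional ℝ E]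
    (A : E → Set E) (M : Set E) (xbar : E) (P : CpPatch p F M xbar) : Prop :=
  UpperSC A ∧
  -- Regularity
  (∃ W ∈ 𝓝 xbar, ∀ x ∈ W, (A x).Nonempty ∧ IsClosed (A x) ∧ Convex ℝ (A x)) ∧
  -- Sharpness
  P.normal xbar = Lin (A xbar) ∧
  (∃ η : E → E, ∃ W ∈ 𝓝 xbar, ContinuousOn η (M ∩ W) ∧
    ∀ x ∈ M ∩ W,
      (fun v => (Submodule.orthogonalProjectionOnto (P.tangent x) v : E)) '' A x = {η x}) ∧
  -- Continuity
  ContinuousAlongNear A M xbar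

/-- The `ε`-localization of `A` around `(xbar, ubar)`. -/
def Locz {E : Type*} [NormedAddCommGroup E] [InnerProductSpace ℝ E]
    (A : E → Set E) (xbar ubar : E) (ε : ℝ) (x : E) : Set E :=
  if ‖x - xbar‖ < ε then {u ∈ A x | ‖u - ubar‖ < ε} else ∅

/-- `A` is `r`-resolvent-regular at `xbar` for `ubar`, with constants `r > 0`, `ε > 0`. -/
def ResolventRegular {E : Type*} [NormedAddCommGroup E] [InnerProductSpace ℝ E]
    (A : E → Set E) (xbar ubar : E) (r ε : ℝ) : Prop :=
  0 < r ∧ 0 < ε ∧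
  (∀ x y u v : E, u ∈ Locz A xbar ubar ε x → v ∈ Locz A xbar ubar ε y →
    (inner ℝ (x - y) (u - v) : ℝ) ≥ -r * ‖x - y‖ ^ 2) ∧
  (∀ γ : ℝ, 0 < γ → γ < 1 / r →
    ∃ W ∈ 𝓝 (xbar + γ • ubar), ∃ J : E → E, ContinuousOn J W ∧
      ∀ z ∈ W, ∀ x : E,
        (∃ u ∈ Locz A xbar ubar ε x, z = x + γ • u) ↔ x = J z)

/-- The local union `U_{γ,ε} = ⋃_{x ∈ M, ‖x-x̄‖<ε} (x + γ A_ε(x))`. -/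
def LocalUnion {E : Type*} [NormedAddCommGroup E] [InnerProductSpace ℝ E]
    (A : E → Set E) (M : Set E) (xbar ubar : E) (γ ε : ℝ) : Set E :=
  {z | ∃ x ∈ M, ‖x - xbar‖ < ε ∧ ∃ u ∈ Locz A xbar ubar ε x, z = x + γ • u}

/-! Everything splits coordinatewise. The derivative of the product patch is block diagonal, so
the tangent space of the product manifold is the product of the tangent spaces; the orthogonal
complement of a product of subspaces, and the orthogonal projection onto it, are computed
coordinatewise; the affine span of a product of nonempty sets is the product of the affine spans;
and convergence in the `ℓ²` product is convergence in each coordinate. -/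

open WithLp

section PiLpSets

variable {ι : Type*} {E : ι → Type*}

lemma PiLp.setOf_forall_mem_eq_preimage (p : ENNReal) (S : ∀ i, Set (E i)) :
    {y : PiLp p E | ∀ i, y i ∈ S i} = ofLp ⁻¹' univ.pi S := by
  ext; simp

lemma PiLp.setOf_forall_mem_mem_nhds [Fintype ι] (p : ENNReal) [∀ i, TopologicalSpace (E i)]
    {S : ∀ i, Set (E i)} {x : PiLp p E} (h : ∀ i, S i ∈ 𝓝 (x i)) :
    {y : PiLp p E | ∀ i, y i ∈ S i} ∈ 𝓝 x := by
  rw [PiLp.setOf_forall_mem_eq_preimage]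
  exact (PiLp.continuous_ofLp p E).continuousAt.preimage_mem_nhds
    (set_pi_mem_nhds finite_univ fun i _ => h i)

lemma PiLp.isClosed_setOf_forall_mem (p : ENNReal) [∀ i, TopologicalSpace (E i)]
    {S : ∀ i, Set (E i)} (h : ∀ i, IsClosed (S i)) : IsClosed {y : PiLp p E | ∀ i, y i ∈ S i} := by
  rw [PiLp.setOf_forall_mem_eq_preimage]
  exact (isClosed_set_pi fun i _ => h i).preimage (PiLp.continuous_ofLp p E)

lemma PiLp.convex_setOf_forall_mem (p : ENNReal) {𝕜 : Type*} [Semiring 𝕜] [PartialOrder 𝕜]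
    [∀ i, AddCommGroup (E i)] [∀ i, Module 𝕜 (E i)] {S : ∀ i, Set (E i)}
    (h : ∀ i, Convex 𝕜 (S i)) : Convex 𝕜 {y : PiLp p E | ∀ i, y i ∈ S i} := by
  rw [PiLp.setOf_forall_mem_eq_preimage]
  exact (convex_pi fun i _ => h i).linear_preimage (WithLp.linearEquiv p 𝕜 (∀ i, E i)).toLinearMap

lemma PiLp.image_setOf_forall_mem_eq_singleton {p : ENNReal} {E' : ι → Type*}
    {g : PiLp p E → PiLp p E'} {f : ∀ i, E i → E' i} (hg : ∀ u i, g u i = f i (u i))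
    {S : ∀ i, Set (E i)} {y : ∀ i, E' i} (h : ∀ i, f i '' S i = {y i}) :
    g '' {u : PiLp p E | ∀ i, u i ∈ S i} = {toLp p y} := by
  have hS : ∀ i, (S i).Nonempty := fun i => image_nonempty.1 (h i ▸ singleton_nonempty _)
  choose s hs using hS
  refine eq_singleton_iff_nonempty_unique_mem.2 ⟨⟨g (toLp p s), mem_image_of_mem g hs⟩, ?_⟩
  rintro _ ⟨u, hu, rfl⟩
  ext i
  rw [hg]
  exact (h i).subset (mem_image_of_mem (f i) (hu i))

lemma ContinuousOn.piLp_map {p : ENNReal} {E' : ι → Type*} [∀ i, TopologicalSpace (E i)]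
    [∀ i, TopologicalSpace (E' i)] {f : ∀ i, E i → E' i} {S : ∀ i, Set (E i)}
    (h : ∀ i, ContinuousOn (f i) (S i)) :
    ContinuousOn (fun x : PiLp p E => toLp p (fun i => f i (x i)))
      {x : PiLp p E | ∀ i, x i ∈ S i} :=
  (PiLp.continuous_toLp p E').comp_continuousOn <| continuousOn_pi.2 fun i =>
    (h i).comp (PiLp.continuous_apply p E i).continuousOn fun _ hx => hx i

end PiLpSets

section PiLpSubmodule

variable {ι : Type*} {E F : ι → Type*}

def Submodule.piLp (p : ENNReal) {𝕜 : Type*} [Semiring 𝕜] [∀ i, AddCommGroup (E i)]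
    [∀ i, Module 𝕜 (E i)] (S : ∀ i, Submodule 𝕜 (E i)) : Submodule 𝕜 (PiLp p E) :=
  (Submodule.pi univ S).comap (WithLp.linearEquiv p 𝕜 (∀ i, E i)).toLinearMap

@[simp]
lemma Submodule.mem_piLp {p : ENNReal} {𝕜 : Type*} [Semiring 𝕜] [∀ i, AddCommGroup (E i)]
    [∀ i, Module 𝕜 (E i)] {S : ∀ i, Submodule 𝕜 (E i)} {u : PiLp p E} :
    u ∈ Submodule.piLp p S ↔ ∀ i, u i ∈ S i := by
  simp [Submodule.piLp]

lemma LinearMap.range_eq_piLp {p : ENNReal} {𝕜 : Type*} [Semiring 𝕜] [∀ i, AddCommGroup (E i)]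
    [∀ i, Module 𝕜 (E i)] [∀ i, AddCommGroup (F i)] [∀ i, Module 𝕜 (F i)]
    {L : PiLp p F →ₗ[𝕜] PiLp p E} {f : ∀ i, F i →ₗ[𝕜] E i} (h : ∀ v i, L v i = f i (v i)) :
    LinearMap.range L = Submodule.piLp p (fun i => LinearMap.range (f i)) := by
  ext u
  simp only [LinearMap.mem_range, Submodule.mem_piLp]
  constructor
  · rintro ⟨v, rfl⟩ i
    exact ⟨v i, (h v i).symm⟩
  · intro hu
    choose w hw using hu
    exact ⟨toLp p w, PiLp.ext fun i => (h _ i).trans (hw i)⟩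

lemma PiLp.sum_single [Fintype ι] [DecidableEq ι] (p : ENNReal) [∀ i, AddCommGroup (E i)]
    (u : PiLp p E) : ∑ i, PiLp.single p i (u i) = u := by
  ext j
  simp [← PiLp.toLp_single, Finset.sum_apply]

lemma PiLp.vectorSpan_setOf_forall_mem [Fintype ι] (p : ENNReal) {𝕜 : Type*} [Ring 𝕜]
    [∀ i, AddCommGroup (E i)] [∀ i, Module 𝕜 (E i)] {S : ∀ i, Set (E i)}
    (hS : ∀ i, (S i).Nonempty) :
    vectorSpan 𝕜 {u : PiLp p E | ∀ i, u i ∈ S i} =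
      Submodule.piLp p (fun i => vectorSpan 𝕜 (S i)) := by
  classical
  refine le_antisymm (Submodule.span_le.2 ?_) fun u hu => ?_
  · rintro _ ⟨a, ha, b, hb, rfl⟩
    exact Submodule.mem_piLp.2 fun i => vsub_mem_vectorSpan 𝕜 (ha i) (hb i)
  rw [← PiLp.sum_single p u]
  refine Submodule.sum_mem _ fun i _ => ?_
  choose c hc using hS
  let L : E i →ₗ[𝕜] PiLp p E :=
    (WithLp.linearEquiv p 𝕜 (∀ i, E i)).symm.toLinearMap ∘ₗ LinearMap.single 𝕜 E i
  suffices (vectorSpan 𝕜 (S i)).map L ≤ vectorSpan 𝕜 {u : PiLp p E | ∀ i, u i ∈ S i} from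
    this ⟨u i, Submodule.mem_piLp.1 hu i, rfl⟩
  rw [vectorSpan_def, Submodule.map_span_le]
  rintro _ ⟨a, ha, b, hb, rfl⟩
  -- `L (a - b)` is the difference of two points of the product that differ only at `i`
  have hupdate : ∀ s ∈ S i, toLp p (Function.update c i s) ∈ {u : PiLp p E | ∀ i, u i ∈ S i} :=
    fun s hs j => by rcases eq_or_ne j i with rfl | hj <;> simp [*]
  convert vsub_mem_vectorSpan 𝕜 (hupdate a ha) (hupdate b hb) using 1
  change PiLp.single p i (a - b) = toLp p (Function.update c i a) - toLp p (Function.update c i b)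
  ext j
  rw [WithLp.ofLp_sub, Pi.sub_apply, PiLp.toLp_apply, PiLp.toLp_apply]
  rcases eq_or_ne j i with rfl | hj
  · simp only [PiLp.single_eq_same, Function.update_self]
  · simp only [PiLp.single_eq_of_ne p hj, Function.update_of_ne hj, sub_self]

lemma PiLp.lin_setOf_forall_mem [Fintype ι] [∀ i, NormedAddCommGroup (E i)]
    [∀ i, InnerProductSpace ℝ (E i)] {S : ∀ i, Set (E i)} (hS : ∀ i, (S i).Nonempty) :
    Lin {u : PiLp 2 E | ∀ i, u i ∈ S i} = Submodule.piLp 2 (fun i => Lin (S i)) := by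
  simp only [Lin, direction_affineSpan]
  exact PiLp.vectorSpan_setOf_forall_mem 2 hS

end PiLpSubmodule

section PiLpInner

variable {ι : Type*} [Fintype ι] {E : ι → Type*} [∀ i, NormedAddCommGroup (E i)]
  [∀ i, InnerProductSpace ℝ (E i)]

lemma PiLp.inner_single_left [DecidableEq ι] (i : ι) (w : E i) (u : PiLp 2 E) :
    ⟪PiLp.single 2 i w, u⟫ = ⟪w, u i⟫ := by
  rw [PiLp.inner_apply, Finset.sum_eq_single i (fun j _ hj => by simp [Pi.single_eq_of_ne hj])
    (by simp)]
  simp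

lemma Submodule.piLp_orthogonal (S : ∀ i, Submodule ℝ (E i)) :
    (Submodule.piLp 2 S)ᗮ = Submodule.piLp 2 (fun i => (S i)ᗮ) := by
  classical
  ext u
  simp only [Submodule.mem_orthogonal, Submodule.mem_piLp]
  constructor
  · intro h i w hw
    have hsingle : ∀ j, PiLp.single 2 i w j ∈ S j := fun j => by
      rcases eq_or_ne j i with rfl | hj
      · rwa [PiLp.single_eq_same]
      · rw [PiLp.single_eq_of_ne 2 hj]
        exact (S j).zero_mem
    simpa only [PiLp.inner_single_left] using h _ hsingle
  · intro h v hv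
    rw [PiLp.inner_apply]
    exact Finset.sum_eq_zero fun i _ => h i _ (hv i)

lemma Submodule.starProjection_apply_of_eq_piLp {K : Submodule ℝ (PiLp 2 E)}
    [K.HasOrthogonalProjection] {S : ∀ i, Submodule ℝ (E i)} [∀ i, (S i).HasOrthogonalProjection]
    (hK : K = Submodule.piLp 2 S) (v : PiLp 2 E) (i : ι) :
    K.starProjection v i = (S i).starProjection (v i) := by
  suffices K.starProjection v = toLp 2 fun i => (S i).starProjection (v i) by
    rw [this, PiLp.toLp_apply]
  subst hK
  refine Submodule.eq_starProjection_of_mem_orthogonal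
    (Submodule.mem_piLp.2 fun i => (S i).starProjection_apply_mem (v i)) ?_
  rw [Submodule.piLp_orthogonal, Submodule.mem_piLp]
  exact fun i => (S i).sub_starProjection_mem_orthogonal (v i)

end PiLpInner

lemma PiLp.fderiv_map_apply {𝕜 : Type*} [NontriviallyNormedField 𝕜] {ι : Type*} [Fintype ι]
    {E F : ι → Type*} [∀ i, NormedAddCommGroup (E i)] [∀ i, NormedSpace 𝕜 (E i)]
    [∀ i, NormedAddCommGroup (F i)] [∀ i, NormedSpace 𝕜 (F i)] (p : ENNReal) [Fact (1 ≤ p)]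
    {φ : ∀ i, F i → E i} {t : PiLp p F} (h : ∀ i, DifferentiableAt 𝕜 (φ i) (t i))
    (v : PiLp p F) (i : ι) :
    fderiv 𝕜 (fun t : PiLp p F => toLp p fun i => φ i (t i)) t v i = fderiv 𝕜 (φ i) (t i) (v i) := by
  have hcoord : ∀ i, HasFDerivAt (fun t : PiLp p F => φ i (t i))
      (fderiv 𝕜 (φ i) (t i) ∘L PiLp.proj p F i) t :=
    fun i => (h i).hasFDerivAt.comp t (PiLp.hasFDerivAt_apply p t i)
  have hdiff : DifferentiableAt 𝕜 (fun t : PiLp p F => toLp p fun i => φ i (t i)) t :=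
    (differentiableAt_piLp p).2 fun i => (hcoord i).differentiableAt
  have hfderiv := (hasFDerivWithinAt_piLp p).1 (hdiff.hasFDerivAt.hasFDerivWithinAt (s := univ)) i
  rw [hasFDerivWithinAt_univ] at hfderiv
  exact congrArg (· v) (hfderiv.unique (hcoord i))

namespace CpPatch

variable {p : ℕ∞} {F : Type*} [NormedAddCommGroup F] [InnerProductSpace ℝ F]
  {E : Type*} [NormedAddCommGroup E] [InnerProductSpace ℝ E] {M : Set E} {xbar : E}

lemma exists_mem_V_of_mem (P : CpPatch p F M xbar) {x : E} (hx : x ∈ M) : ∃ t ∈ P.V, P.toFun t = x := by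
  rwa [P.image_eq] at hx

lemma mem_self (P : CpPatch p F M xbar) : xbar ∈ M := by
  rw [P.image_eq]
  exact ⟨0, P.zero_mem, P.map_zero⟩

lemma tangent_toFun (P : CpPatch p F M xbar) {t : F} (ht : t ∈ P.V) :
    P.tangent (P.toFun t) = LinearMap.range (fderiv ℝ P.toFun t : F →ₗ[ℝ] E) := by
  have : Nonempty F := ⟨0⟩
  rw [tangent, P.injOn.leftInvOn_invFunOn ht]

lemma differentiableAt (P : CpPatch p F M xbar) (hp : 1 ≤ p) {t : F} (ht : t ∈ P.V) : DifferentiableAt ℝ P.toFun t :=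
  (P.contDiffOn.differentiableOn (by exact_mod_cast (zero_lt_one.trans_le hp).ne')).differentiableAt
    (P.isOpen_V.mem_nhds ht)

lemma tangent_pi {ι : Type*} [Fintype ι] {F E : ι → Type*} [∀ i, NormedAddCommGroup (F i)]
    [∀ i, InnerProductSpace ℝ (F i)] [∀ i, NormedAddCommGroup (E i)]
    [∀ i, InnerProductSpace ℝ (E i)] {M : ∀ i, Set (E i)} {xbar : PiLp 2 E} (hp : 1 ≤ p)
    (P : ∀ i, CpPatch p (F i) (M i) (xbar i))
    (Q : CpPatch p (PiLp 2 F) {x : PiLp 2 E | ∀ i, x i ∈ M i} xbar)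
    (hQV : Q.V = {t : PiLp 2 F | ∀ i, t i ∈ (P i).V})
    (hQφ : Q.toFun = fun t => toLp 2 fun i => (P i).toFun (t i))
    {x : PiLp 2 E} (hx : ∀ i, x i ∈ M i) :
    Q.tangent x = Submodule.piLp 2 (fun i => (P i).tangent (x i)) := by
  obtain ⟨t, htQ, rfl⟩ := Q.exists_mem_V_of_mem hx
  have ht : ∀ i, t i ∈ (P i).V := by rwa [hQV] at htQ
  have hcoord : ∀ i, Q.toFun t i = (P i).toFun (t i) := by simp [hQφ]
  simp only [hcoord, (P _).tangent_toFun (ht _), Q.tangent_toFun htQ]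
  refine LinearMap.range_eq_piLp fun v i => ?_
  simp only [ContinuousLinearMap.coe_coe, hQφ]
  exact PiLp.fderiv_map_apply 2 (fun i => (P i).differentiableAt hp (ht i)) v i

end CpPatch

section PartlySmoothProduct

variable {ι : Type*} [Fintype ι] {E : ι → Type*} [∀ i, NormedAddCommGroup (E i)]
  [∀ i, InnerProductSpace ℝ (E i)] {A : ∀ i, E i → Set (E i)} {M : ∀ i, Set (E i)}

lemma UpperSC.piLp (h : ∀ i, UpperSC (A i)) :
    UpperSC fun x : PiLp 2 E => {u : PiLp 2 E | ∀ i, u i ∈ A i (x i)} :=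
  fun x u x₀ u₀ hx hu hu₀ i => h i (fun k => x k i) (fun k => u k i) (x₀ i) (u₀ i)
    ((PiLp.continuous_apply 2 E i).tendsto x₀ |>.comp hx) (fun k => hu k i)
    ((PiLp.continuous_apply 2 E i).tendsto u₀ |>.comp hu₀)

lemma LowerSCAlongAt.piLp {x : PiLp 2 E} (h : ∀ i, LowerSCAlongAt (A i) (M i) (x i)) :
    LowerSCAlongAt (fun x : PiLp 2 E => {u : PiLp 2 E | ∀ i, u i ∈ A i (x i)})
      {x : PiLp 2 E | ∀ i, x i ∈ M i} x := by
  intro u₀ hu₀ xs hxs hlim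
  choose u hu hu_lim using fun i => h i (u₀ i) (hu₀ i) (fun k => xs k i) (fun k => hxs k i)
    ((PiLp.continuous_apply 2 E i).tendsto x |>.comp hlim)
  exact ⟨fun k => toLp 2 fun i => u i k, fun k i => hu i k,
    (PiLp.continuous_toLp 2 E).tendsto _ |>.comp (tendsto_pi_nhds.2 hu_lim)⟩

lemma ContinuousAlongNear.piLp {xbar : PiLp 2 E}
    (h : ∀ i, ContinuousAlongNear (A i) (M i) (xbar i)) :
    ContinuousAlongNear (fun x : PiLp 2 E => {u : PiLp 2 E | ∀ i, u i ∈ A i (x i)})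
      {x : PiLp 2 E | ∀ i, x i ∈ M i} xbar := by
  choose W hW hlsc using h
  exact ⟨_, PiLp.setOf_forall_mem_mem_nhds 2 hW,
    fun x hx => LowerSCAlongAt.piLp fun i => hlsc i (x i) ⟨hx.1 i, hx.2 i⟩⟩

variable [∀ i, FiniteDimensional ℝ (E i)]

theorem PartlySmoothAt.piLp {p : ℕ∞} (hp : 1 ≤ p) {F : ι → Type*}
    [∀ i, NormedAddCommGroup (F i)] [∀ i, InnerProductSpace ℝ (F i)] {xbar : PiLp 2 E}
    (P : ∀ i, CpPatch p (F i) (M i) (xbar i))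
    (hA : ∀ i, PartlySmoothAt (A i) (M i) (xbar i) (P i))
    (Q : CpPatch p (PiLp 2 F) {x : PiLp 2 E | ∀ i, x i ∈ M i} xbar)
    (hQV : Q.V = {t : PiLp 2 F | ∀ i, t i ∈ (P i).V})
    (hQφ : Q.toFun = fun t => toLp 2 fun i => (P i).toFun (t i)) :
    PartlySmoothAt (fun x : PiLp 2 E => {u : PiLp 2 E | ∀ i, u i ∈ A i (x i)})
      {x : PiLp 2 E | ∀ i, x i ∈ M i} xbar Q := by
  have hT {x : PiLp 2 E} (hx : ∀ i, x i ∈ M i) := CpPatch.tangent_pi hp P Q hQV hQφ hx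
  choose W hW hreg using fun i => (hA i).2.1
  refine ⟨UpperSC.piLp fun i => (hA i).1, ⟨_, PiLp.setOf_forall_mem_mem_nhds 2 hW, fun x hx => ?_⟩,
    ?_, ?_, ContinuousAlongNear.piLp fun i => (hA i).2.2.2.2⟩
  · choose u hu using fun i => (hreg i _ (hx i)).1
    exact ⟨⟨toLp 2 u, hu⟩, PiLp.isClosed_setOf_forall_mem 2 fun i => (hreg i _ (hx i)).2.1,
      PiLp.convex_setOf_forall_mem 2 fun i => (hreg i _ (hx i)).2.2⟩
  · have hne : ∀ i, (A i (xbar i)).Nonempty := fun i => (hreg i _ (mem_of_mem_nhds (hW i))).1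
    rw [CpPatch.normal, hT fun i => (P i).mem_self, Submodule.piLp_orthogonal,
      PiLp.lin_setOf_forall_mem hne]
    exact congrArg _ (funext fun i => (hA i).2.2.1)
  · choose η Wη hWη hη himg using fun i => (hA i).2.2.2.1
    refine ⟨fun x => toLp 2 fun i => η i (x i), _, PiLp.setOf_forall_mem_mem_nhds 2 hWη,
      (ContinuousOn.piLp_map hη).mono fun x hx i => ⟨hx.1 i, hx.2 i⟩, fun x hx => ?_⟩
    simp only [Submodule.coe_orthogonalProjectionOnto_apply] at himg ⊢
    exact PiLp.image_setOf_forall_mem_eq_singleton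
      (Submodule.starProjection_apply_of_eq_piLp (hT hx.1))
      fun i => himg i _ ⟨hx.1 i, hx.2 i⟩

end PartlySmoothProduct

/-- separability (product of partly smooth operators). -/
theorem partly_smooth_pi {m : ℕ} {p : ℕ∞} (hp : 1 ≤ p) (n d : Fin m → ℕ)
    (M : ∀ j, Set (EuclideanSpace ℝ (Fin (n j))))
    (xbar : PiLp 2 (fun j => EuclideanSpace ℝ (Fin (n j))))
    (A : ∀ j, EuclideanSpace ℝ (Fin (n j)) → Set (EuclideanSpace ℝ (Fin (n j))))
    (V : ∀ j, Set (EuclideanSpace ℝ (Fin (d j))))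
    (φ : ∀ j, EuclideanSpace ℝ (Fin (d j)) → EuclideanSpace ℝ (Fin (n j)))
    (P : ∀ j, CpPatch p (EuclideanSpace ℝ (Fin (d j))) (M j) (xbar j))
    (hPV : ∀ j, (P j).V = V j) (hPφ : ∀ j, (P j).toFun = φ j)
    (hA : ∀ j, PartlySmoothAt (A j) (M j) (xbar j) (P j))
    -- the product patch: its domain is `V₁ × ⋯ × V_m` and its map is `t ↦ (φ₁(t₁),…,φ_m(t_m))`
    (Q : CpPatch p (PiLp 2 (fun j => EuclideanSpace ℝ (Fin (d j))))
        {x : PiLp 2 (fun j => EuclideanSpace ℝ (Fin (n j))) | ∀ j, x j ∈ M j} xbar)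
    (hQV : Q.V = {t : PiLp 2 (fun j => EuclideanSpace ℝ (Fin (d j))) | ∀ j, t j ∈ V j})
    (hQφ : Q.toFun = fun t => WithLp.toLp 2 (fun j => φ j (t j))) :
    PartlySmoothAt
      (fun x => {u : PiLp 2 (fun j => EuclideanSpace ℝ (Fin (n j))) | ∀ j, u j ∈ A j (x j)})
      {x : PiLp 2 (fun j => EuclideanSpace ℝ (Fin (n j))) | ∀ j, x j ∈ M j} xbar Q := by
  obtain rfl : V = fun j => (P j).V := funext fun j => (hPV j).symm
  obtain rfl : φ = fun j => (P j).toFun := funext fun j => (hPφ j).symm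
  exact PartlySmoothAt.piLp hp P hA Q hQV hQφ
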